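/- Over 𝔽₂, for every monic irreducible polynomial f of degree n with both trace conditions as in Meyn's theorem, the transform S(x) = x/(x²+1) (the Möbius-conjugate of the Q-transform) sends f to an irreducible polynomial of degree 2n: i.e., (x²+1)^n · f(x/(x²+1)) is irreducible whenever x^n · f((x²+1)/x) is. -/

import Mathlib

/-!
Let `α` be a root of `f` and `β` a root of `α X² + X + α`, so that `α = S(β)`. Then `β` is a root
of the S-transform of `f`, which is monic of degree `2n` because `f(0) ≠ 0`, and `α ∈ 𝔽₂(β)`.
Hence `[𝔽₂(β) : 𝔽₂]` is a multiple of `n = [𝔽₂(α) : 𝔽₂]` that is at most `2n`, and it is `2n`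
(so the S-transform of `f` is the minimal polynomial of `β`) as soon as `β ∉ 𝔽₂(α)`. This is
Artin–Schreier: `γ = αβ` satisfies `γ² + γ = α²`, which has no solution in `𝔽₂(α)` because
`Tr(α²) = Tr(α) = 1` while `Tr(γ² + γ) = 0`.
-/

open Polynomial

/-- The Q-transform `T_Q(f) = x^(deg f) · f((x²+1)/x)`. -/
noncomputable def Qtransform {F : Type*} [Field F] (f : F[X]) : F[X] :=
  ∑ i ∈ Finset.range (f.natDegree + 1),
    C (f.coeff i) * (X ^ 2 + 1) ^ i * X ^ (f.natDegree - i)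

/-- The S-transform for `S(x) = x/(x²+1)`, the Möbius conjugate of the Q-transform:
`(x²+1)^(deg f) · f(x/(x²+1)) = ∑ aᵢ xⁱ (x²+1)^(n-i)`. -/
noncomputable def Stransform {F : Type*} [Field F] (f : F[X]) : F[X] :=
  ∑ i ∈ Finset.range (f.natDegree + 1),
    C (f.coeff i) * X ^ i * (X ^ 2 + 1) ^ (f.natDegree - i)

open IntermediateField

section Stransform

variable {F : Type*} [Field F]

lemma natDegree_X_sq_add_one : (X ^ 2 + 1 : F[X]).natDegree = 2 := by
  simpa using natDegree_X_pow_add_C (n := 2) (r := (1 : F))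

lemma natDegree_Stransform_term_le (f : F[X]) (i : ℕ) :
    (C (f.coeff i) * X ^ i * (X ^ 2 + 1) ^ (f.natDegree - i)).natDegree ≤
      i + (f.natDegree - i) * 2 :=
  natDegree_mul_le_of_le ((natDegree_C_mul_le _ _).trans (natDegree_X_pow_le i))
    (natDegree_pow_le_of_le _ natDegree_X_sq_add_one.le)

lemma natDegree_Stransform_le (f : F[X]) : (Stransform f).natDegree ≤ 2 * f.natDegree :=
  natDegree_sum_le_of_forall_le _ _ fun i hi =>
    (natDegree_Stransform_term_le f i).trans (by rw [Finset.mem_range] at hi; omega)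

lemma coeff_Stransform_two_mul_natDegree (f : F[X]) :
    (Stransform f).coeff (2 * f.natDegree) = f.coeff 0 := by
  rw [Stransform, finsetSum_coeff, Finset.sum_eq_single 0]
  · have hmonic : ((X ^ 2 + 1 : F[X]) ^ f.natDegree).Monic :=
      (monic_X_pow_add_C (1 : F) two_ne_zero).pow _
    have hdeg : ((X ^ 2 + 1 : F[X]) ^ f.natDegree).natDegree = 2 * f.natDegree := by
      rw [natDegree_pow, natDegree_X_sq_add_one, mul_comm]
    simp only [pow_zero, mul_one, Nat.sub_zero]
    rw [coeff_C_mul, ← hdeg, hmonic.coeff_natDegree, mul_one]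
  · intro i hi hi0
    rw [Finset.mem_range] at hi
    exact coeff_eq_zero_of_natDegree_lt ((natDegree_Stransform_term_le f i).trans_lt (by omega))
  · simp

lemma natDegree_Stransform {f : F[X]} (hf : f.coeff 0 ≠ 0) :
    (Stransform f).natDegree = 2 * f.natDegree :=
  (natDegree_Stransform_le f).antisymm
    (le_natDegree_of_ne_zero (by rwa [coeff_Stransform_two_mul_natDegree]))

lemma leadingCoeff_Stransform {f : F[X]} (hf : f.coeff 0 ≠ 0) :
    (Stransform f).leadingCoeff = f.coeff 0 := by
  rw [leadingCoeff, natDegree_Stransform hf, coeff_Stransform_two_mul_natDegree]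

lemma aeval_Stransform {A : Type*} [CommRing A] [Algebra F A] (f : F[X]) {a b : A}
    (hab : a * (b ^ 2 + 1) = b) :
    aeval b (Stransform f) = (b ^ 2 + 1) ^ f.natDegree * aeval a f := by
  rw [Stransform, map_sum, aeval_eq_sum_range, Finset.mul_sum]
  refine Finset.sum_congr rfl fun i hi => ?_
  rw [Finset.mem_range, Nat.lt_succ_iff] at hi
  have hb : b ^ i = a ^ i * (b ^ 2 + 1) ^ i := by rw [← mul_pow, hab]
  have hpow : (b ^ 2 + 1) ^ i * (b ^ 2 + 1) ^ (f.natDegree - i) = (b ^ 2 + 1) ^ f.natDegree := by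
    rw [← pow_add, Nat.add_sub_cancel' hi]
  simp only [map_mul, aeval_C, map_pow, aeval_X, map_add, map_one, Algebra.smul_def, hb]
  linear_combination (algebraMap F A (f.coeff i) * a ^ i) * hpow

end Stransform

section Extension

variable {F E : Type*} [Field F] [Field E] [Algebra F E]

lemma IsAlgClosed.exists_mul_sq_add_one_eq [IsAlgClosed E] {a : E} (ha : a ≠ 0) :
    ∃ b : E, a * (b ^ 2 + 1) = b := by
  obtain ⟨b, hb⟩ := IsAlgClosed.exists_root (C a * X ^ 2 + C (-1) * X + C a)
    (by rw [degree_quadratic ha]; decide)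
  refine ⟨b, ?_⟩
  simp only [IsRoot, eval_add, eval_mul, eval_C, eval_pow, eval_X] at hb
  linear_combination hb

lemma mem_adjoin_simple_of_mul_sq_add_one_eq {a b : E} (hab : a * (b ^ 2 + 1) = b) :
    a ∈ F⟮b⟯ := by
  have hb : b ^ 2 + 1 ≠ 0 := fun h => by
    rw [h, mul_zero] at hab
    simp [← hab] at h
  rw [eq_div_of_mul_eq hb hab]
  exact div_mem (mem_adjoin_simple_self F b)
    (add_mem (pow_mem (mem_adjoin_simple_self F b) 2) (one_mem _))

lemma IntermediateField.finrank_eq_two_mul_of_lt {K L : Type*} [Field K] [Field L] [Algebra K L]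
    {M N : IntermediateField K L} [FiniteDimensional K N] (hlt : M < N)
    (hle : Module.finrank K N ≤ 2 * Module.finrank K M) :
    Module.finrank K N = 2 * Module.finrank K M := by
  obtain ⟨k, hk⟩ := finrank_dvd_of_le_right hlt.le
  have hpos : 0 < Module.finrank K M * k := hk ▸ Module.finrank_pos
  have hk1 : k ≠ 1 := fun h => hlt.ne (eq_of_le_of_finrank_eq hlt.le (by simp [hk, h]))
  have hk2 : k ≤ 2 := by
    rw [hk, mul_comm 2] at hle
    exact Nat.le_of_mul_le_mul_left hle (Nat.pos_of_mul_pos_right hpos)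
  have hk0 : k ≠ 0 := by rintro rfl; simp at hpos
  rw [hk, show k = 2 by omega, mul_comm]

theorem irreducible_Stransform_minpoly {a b : E} (ha : IsIntegral F a)
    (hab : a * (b ^ 2 + 1) = b) (hb : b ∉ F⟮a⟯) : Irreducible (Stransform (minpoly F a)) := by
  have ha0 : a ≠ 0 := by
    rintro rfl
    rw [zero_mul] at hab
    exact hb (hab ▸ zero_mem _)
  have hc := minpoly.coeff_zero_ne_zero ha ha0
  have hroot : aeval b (Stransform (minpoly F a)) = 0 := by
    rw [aeval_Stransform _ hab, minpoly.aeval, mul_zero]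
  have hS0 : Stransform (minpoly F a) ≠ 0 := by
    rw [← leadingCoeff_ne_zero, leadingCoeff_Stransform hc]; exact hc
  have hbint : IsIntegral F b := IsAlgebraic.isIntegral ⟨_, hS0, hroot⟩
  have hdvd := minpoly.dvd F b hroot
  have hdeg : (minpoly F b).natDegree = 2 * (minpoly F a).natDegree := by
    have : FiniteDimensional F F⟮b⟯ := adjoin.finiteDimensional hbint
    rw [← adjoin.finrank ha, ← adjoin.finrank hbint]
    refine finrank_eq_two_mul_of_lt
      (lt_of_le_of_ne ?_ fun h => hb (h ▸ mem_adjoin_simple_self F b)) ?_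
    · exact adjoin_simple_le_iff.mpr (mem_adjoin_simple_of_mul_sq_add_one_eq hab)
    · rw [adjoin.finrank ha, adjoin.finrank hbint, ← natDegree_Stransform hc]
      exact natDegree_le_of_dvd hdvd hS0
  rw [eq_mul_leadingCoeff_of_monic_of_dvd_of_natDegree_le (minpoly.monic hbint) hdvd
    (by rw [natDegree_Stransform hc, hdeg])]
  exact (associated_mul_unit_right (minpoly F b) _
    (isUnit_C.mpr (leadingCoeff_ne_zero.mpr hS0).isUnit)).irreducible (minpoly.irreducible hbint)

end Extension

section CharTwo

open Algebra

lemma Algebra.trace_pow_card_eq_trace {k K : Type*} [Field k] [Fintype k] [Field K] [Algebra k K]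
    [Algebra.IsAlgebraic k K] (y : K) : trace k K (y ^ Fintype.card k) = trace k K y :=
  trace_eq_of_algEquiv (FiniteField.frobeniusAlgEquivOfAlgebraic k K) y

lemma mul_sq_add_one_ne_of_trace_eq_one {K : Type*} [Field K] [Algebra (ZMod 2) K]
    [Algebra.IsAlgebraic (ZMod 2) K]
    {a : K} (ha : trace (ZMod 2) K a = 1) (b : K) : a * (b ^ 2 + 1) ≠ b := by
  have : CharP K 2 := charP_of_injective_algebraMap (algebraMap (ZMod 2) K).injective 2
  intro hab
  have hγ : (a * b) ^ 2 + a * b = a ^ 2 := by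
    linear_combination a * hab + (a * b - a ^ 2) * CharTwo.two_eq_zero (R := K)
  have htr := congrArg (trace (ZMod 2) K) hγ
  have hsq (y : K) : trace (ZMod 2) K (y ^ 2) = trace (ZMod 2) K y := by
    simpa using trace_pow_card_eq_trace (k := ZMod 2) y
  rw [map_add, hsq, hsq, ha, CharTwo.add_self_eq_zero] at htr
  exact zero_ne_one htr

end CharTwo

theorem stransform_irreducible_F2_general (f : (ZMod 2)[X])
    (hmonic : f.Monic) (hirr : Irreducible f)
    (htr1 : f.coeff (f.natDegree - 1) = 1) :
    (Irreducible (Qtransform f) → Irreducible (Stransform f)) ∧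
      Irreducible (Stransform f) ∧ (Stransform f).natDegree = 2 * f.natDegree := by
  obtain ⟨α, hα⟩ := IsAlgClosed.exists_aeval_eq_zero (AlgebraicClosure (ZMod 2)) f
    (degree_pos_of_irreducible hirr).ne'
  have hαint : IsIntegral (ZMod 2) α := ⟨f, hmonic, hα⟩
  obtain rfl : f = minpoly (ZMod 2) α := minpoly.eq_of_irreducible_of_monic hirr hα hmonic
  have htr : Algebra.trace (ZMod 2) (ZMod 2)⟮α⟯ (AdjoinSimple.gen _ α) = 1 := by
    rw [trace_adjoinSimpleGen hαint, nextCoeff_of_natDegree_pos hirr.natDegree_pos, htr1]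
    decide
  have hα0 : α ≠ 0 := by
    intro h
    rw [show AdjoinSimple.gen (ZMod 2) α = 0 from Subtype.ext h, map_zero] at htr
    exact zero_ne_one htr
  obtain ⟨β, hαβ⟩ := IsAlgClosed.exists_mul_sq_add_one_eq hα0
  have := adjoin.finiteDimensional hαint
  have hβ : β ∉ (ZMod 2)⟮α⟯ := fun hβ =>
    mul_sq_add_one_ne_of_trace_eq_one htr ⟨β, hβ⟩ (Subtype.ext (by simpa using hαβ))
  have hSirr := irreducible_Stransform_minpoly hαint hαβ hβ
  exact ⟨fun _ => hSirr, hSirr, natDegree_Stransform (minpoly.coeff_zero_ne_zero hαint hα0)⟩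

/-- Over `𝔽₂`, for every monic irreducible `f` of degree `n` satisfying
both trace conditions of Meyn's theorem (over `𝔽₂` the traces are the coefficients
themselves), the transform `S(x) = x/(x²+1)` sends `f` to an irreducible polynomial of
degree `2n`; indeed `(x²+1)^n · f(x/(x²+1))` is irreducible whenever `x^n · f((x²+1)/x)`
is. -/
theorem stransform_irreducible_F2 (f : (ZMod 2)[X])
    (hmonic : f.Monic) (hirr : Irreducible f)
    (htr1 : f.coeff (f.natDegree - 1) = 1) (htr2 : f.coeff 1 / f.coeff 0 = 1) :
    (Irreducible (Qtransform f) → Irreducible (Stransform f)) ∧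
      Irreducible (Stransform f) ∧ (Stransform f).natDegree = 2 * f.natDegree :=
  stransform_irreducible_F2_general f hmonic hirr htr1
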